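/- Let $T \in \mathbb{R}^{N \times M}$ have nonnegative entries with row sums $\mu_n > 0$ and column sums $\nu_m > 0$, where $\sum_n \mu_n = \sum_m \nu_m = 1$. Then for any matrices $D_s \in \mathbb{R}^{N \times M}$ and $G_1 \in \mathbb{R}^{N \times N}$, $G_2 \in \mathbb{R}^{M \times M}$, the quadratic Gromov cost satisfies $\sum_{n,n',m,m'} (g_{1,nn'} - g_{2,mm'})^2 t_{nm} t_{n'm'} = \langle (G_1 \odot G_1)\mu \mathbf{1}_M^\top + \mathbf{1}_N \nu^\top (G_2 \odot G_2)^\top - 2 G_1 T G_2^\top, \; T \rangle$, where $\odot$ is the Hadamard product and $\langle A, B \rangle = \sum_{ij} a_{ij} b_{ij}$. -/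

import Mathlib

/-! Expanding the square splits the cost into three sums over `(n, n', m, m')`. In the two pure
terms one index of the second copy of `T` is free and sums out to a marginal (`μ` or `ν`); the
cross term `∑ g₁ g₂ t t` is the Frobenius pairing of `G₁ T G₂ᵀ` with `T`. -/

open Finset Matrix

section
variable {ι κ R : Type*} [Fintype ι] [Fintype κ] [CommSemiring R] (T : Matrix ι κ R)

theorem sum_mul_mul_eq_mulVec_rowSum (A : Matrix ι ι R) {μ : ι → R}
    (hrow : ∀ n, ∑ m, T n m = μ n) :
    ∑ n, ∑ n', ∑ m, ∑ m', A n n' * T n m * T n' m' = ∑ n, ∑ m, (A *ᵥ μ) n * T n m := by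
  refine sum_congr rfl fun n _ => ?_
  rw [sum_comm]
  refine sum_congr rfl fun m _ => ?_
  simp only [← mul_sum, hrow, mulVec, dotProduct]
  rw [sum_mul]
  exact sum_congr rfl fun n' _ => by ring

theorem sum_mul_mul_eq_mulVec_colSum (B : Matrix κ κ R) {ν : κ → R}
    (hcol : ∀ m, ∑ n, T n m = ν m) :
    ∑ n, ∑ n', ∑ m, ∑ m', B m m' * T n m * T n' m' = ∑ n, ∑ m, (B *ᵥ ν) m * T n m := by
  refine sum_congr rfl fun n _ => ?_
  rw [sum_comm]
  refine sum_congr rfl fun m _ => ?_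
  rw [sum_comm]
  simp only [← mul_sum, hcol, mulVec, dotProduct]
  rw [sum_mul]
  exact sum_congr rfl fun m' _ => by ring

theorem sum_mul_mul_eq_mul_mul_transpose (A : Matrix ι ι R) (B : Matrix κ κ R) :
    ∑ n, ∑ n', ∑ m, ∑ m', A n n' * B m m' * T n m * T n' m' =
      ∑ n, ∑ m, (A * T * Bᵀ) n m * T n m := by
  simp_rw [mul_apply, transpose_apply, sum_mul]
  refine sum_congr rfl fun n _ => ?_
  rw [sum_comm]
  refine sum_congr rfl fun m _ => ?_
  rw [sum_comm]
  exact sum_congr rfl fun m' _ => sum_congr rfl fun n' _ => by ring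
end

theorem gw_quadratic_cost_matrix_identity_general (N M : ℕ)
    (T : Matrix (Fin N) (Fin M) ℝ)
    (μ : Fin N → ℝ) (ν : Fin M → ℝ)
    (hrow : ∀ n, ∑ m, T n m = μ n) (hcol : ∀ m, ∑ n, T n m = ν m)
    (G₁ : Matrix (Fin N) (Fin N) ℝ) (G₂ : Matrix (Fin M) (Fin M) ℝ) :
    (∑ n, ∑ n', ∑ m, ∑ m', (G₁ n n' - G₂ m m') ^ 2 * T n m * T n' m') =
      ∑ n, ∑ m,
        (((G₁.map (fun a => a * a)).mulVec μ n) +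
          ((G₂.map (fun a => a * a)).mulVec ν m) -
          2 * (G₁ * T * G₂.transpose) n m) * T n m := by
  have expand : ∀ n n' m m', (G₁ n n' - G₂ m m') ^ 2 * T n m * T n' m' =
      G₁.map (fun a => a * a) n n' * T n m * T n' m' +
        G₂.map (fun a => a * a) m m' * T n m * T n' m' -
        2 * (G₁ n n' * G₂ m m' * T n m * T n' m') := fun n n' m m' => by
    simp only [map_apply]; ring
  calc _ = ∑ n, ∑ n', ∑ m, ∑ m', G₁.map (fun a => a * a) n n' * T n m * T n' m' +
        ∑ n, ∑ n', ∑ m, ∑ m', G₂.map (fun a => a * a) m m' * T n m * T n' m' -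
        2 * ∑ n, ∑ n', ∑ m, ∑ m', G₁ n n' * G₂ m m' * T n m * T n' m' := by
        simp only [expand, sum_add_distrib, sum_sub_distrib, mul_sum]
    _ = ∑ n, ∑ m, ((G₁.map fun a => a * a) *ᵥ μ) n * T n m +
        ∑ n, ∑ m, ((G₂.map fun a => a * a) *ᵥ ν) m * T n m -
        2 * ∑ n, ∑ m, (G₁ * T * G₂ᵀ) n m * T n m := by
        rw [sum_mul_mul_eq_mulVec_rowSum T _ hrow, sum_mul_mul_eq_mulVec_colSum T _ hcol,
          sum_mul_mul_eq_mul_mul_transpose]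
    _ = _ := by simp only [add_mul, sub_mul, sum_add_distrib, sum_sub_distrib, mul_sum, mul_assoc]

theorem gw_quadratic_cost_matrix_identity (N M : ℕ)
    (T : Matrix (Fin N) (Fin M) ℝ) (hT : ∀ n m, 0 ≤ T n m)
    (μ : Fin N → ℝ) (ν : Fin M → ℝ)
    (hμpos : ∀ n, 0 < μ n) (hνpos : ∀ m, 0 < ν m)
    (hrow : ∀ n, ∑ m, T n m = μ n) (hcol : ∀ m, ∑ n, T n m = ν m)
    (hμsum : ∑ n, μ n = 1) (hνsum : ∑ m, ν m = 1)
    (Ds : Matrix (Fin N) (Fin M) ℝ)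
    (G₁ : Matrix (Fin N) (Fin N) ℝ) (G₂ : Matrix (Fin M) (Fin M) ℝ) :
    (∑ n, ∑ n', ∑ m, ∑ m', (G₁ n n' - G₂ m m') ^ 2 * T n m * T n' m') =
      ∑ n, ∑ m,
        (((G₁.map (fun a => a * a)).mulVec μ n) +
          ((G₂.map (fun a => a * a)).mulVec ν m) -
          2 * (G₁ * T * G₂.transpose) n m) * T n m :=
  gw_quadratic_cost_matrix_identity_general N M T μ ν hrow hcol G₁ G₂
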